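/- Let f be a nonnegative trigonometric polynomial, let g ≥ 2 and k = n/g ∈ ℕ, and let p be a trigonometric polynomial satisfying the TGM condition (i) at every zero of f and the TGM condition (ii) globally. Let f̂(x) = (1/g) Σ_{y ∈ Ω_g(x/g)} f(y)|p(y)|². If the trigonometric polynomial f|p|² has degree c, then f̂ is a trigonometric polynomial of degree at most ⌊c/g⌋. -/

import Mathlib

open Complex Filter Topology

noncomputable section

/-- A real-valued function is a trigonometric polynomial: a finite sum `∑_{|j|≤c} a_j e^{ijx}`. -/
def IsTrigPolyR (f : ℝ → ℝ) : Prop :=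
  ∃ (c : ℕ) (a : ℤ → ℂ), ∀ x : ℝ,
    (f x : ℂ) = ∑ j ∈ Finset.Icc (-(c : ℤ)) (c : ℤ), a j * Complex.exp (Complex.I * (j : ℂ) * (x : ℂ))

/-- TGM condition (i): for every zero `x₀` of `f` (in `[0,2π)`), for each `k = 1,…,g−1`,
`lim_{x→x₀} p(x + 2πk/g)² / f(x)` exists finite. -/
def TGMCondOne (f p : ℝ → ℝ) (g : ℕ) : Prop :=
  ∀ x₀ ∈ Set.Ico (0 : ℝ) (2 * Real.pi), f x₀ = 0 →
    ∀ j : ℕ, 1 ≤ j → j < g →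
      ∃ L : ℝ,
        Filter.Tendsto (fun x : ℝ => (p (x + 2 * Real.pi * (j : ℝ) / (g : ℝ)))^2 / f x)
          (nhdsWithin x₀ {x : ℝ | f x ≠ 0}) (nhds L)

/-- TGM condition (ii): `∑_{y ∈ Ω_g(x)} p(y)² > 0` for all `x ∈ [0,2π)`. -/
def TGMCondTwo (p : ℝ → ℝ) (g : ℕ) : Prop :=
  ∀ x ∈ Set.Ico (0 : ℝ) (2 * Real.pi),
    0 < ∑ j ∈ Finset.range g, (p (x + 2 * Real.pi * (j : ℝ) / (g : ℝ)))^2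

/-- The projected symbol `f̂(x) = (1/g) ∑_{y ∈ Ω_g(x/g)} f(y) |p(y)|²`. -/
def projSymbol (g : ℕ) (f p : ℝ → ℝ) : ℝ → ℝ := fun x =>
  ((g : ℝ))⁻¹ *
    ∑ j ∈ Finset.range g,
      f ((x + 2 * Real.pi * (j : ℝ)) / (g : ℝ)) * (p ((x + 2 * Real.pi * (j : ℝ)) / (g : ℝ)))^2

/-! Writing `h = f p²` as `∑_{|j| ≤ c} a_j e^{ijx}`, averaging over the `g` points
`(x + 2πm)/g` multiplies the `j`-th mode `e^{ijx/g}` by `(1/g) ∑_m ζ^{jm}` with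
`ζ = e^{2πi/g}`; this is `1` when `g ∣ j` and `0` otherwise. So only the modes `j = g l`
survive, each becoming `a_{gl} e^{ilx}`, and `|gl| ≤ c` forces `|l| ≤ ⌊c/g⌋`. -/

theorem IsPrimitiveRoot.geom_sum_zpow_eq_ite {K : Type*} [Field K] {ζ : K} {g : ℕ}
    (hζ : IsPrimitiveRoot ζ g) (j : ℤ) :
    ∑ m ∈ Finset.range g, (ζ ^ j) ^ m = if (g : ℤ) ∣ j then (g : K) else 0 := by
  split_ifs with hj
  · simp [(hζ.zpow_eq_one_iff_dvd j).mpr hj]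
  · have hne : ζ ^ j - 1 ≠ 0 := sub_ne_zero.mpr fun h => hj ((hζ.zpow_eq_one_iff_dvd j).mp h)
    have hpow : (ζ ^ j) ^ g = 1 := by rw [← zpow_natCast, ← zpow_mul, mul_comm, zpow_mul,
      zpow_natCast, hζ.pow_eq_one, one_zpow]
    simpa [hpow, hne] using geom_sum_mul (ζ ^ j) g

theorem Int.filter_dvd_Icc_neg {c g : ℤ} (hg : 0 < g) :
    (Finset.Icc (-c) c).filter (g ∣ ·) = (Finset.Icc (-(c / g)) (c / g)).image (g * ·) := by
  ext j
  simp only [Finset.mem_filter, Finset.mem_Icc, Finset.mem_image]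
  constructor
  · rintro ⟨⟨hlo, hhi⟩, l, rfl⟩
    refine ⟨l, ⟨?_, ?_⟩, rfl⟩
    · rw [neg_le]
      exact Int.le_ediv_of_mul_le hg (by linarith)
    · exact Int.le_ediv_of_mul_le hg (by linarith)
  · rintro ⟨l, ⟨hlo, hhi⟩, rfl⟩
    have hdiv : g * (c / g) ≤ c := Int.mul_ediv_self_le hg.ne'
    refine ⟨⟨?_, ?_⟩, dvd_mul_right g l⟩ <;> nlinarith

theorem Complex.exp_mul_I_shift_div (j : ℤ) (x : ℂ) (m g : ℕ) :
    exp (I * j * ((x + 2 * Real.pi * m) / g)) =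
      exp (I * j * (x / g)) * (exp (2 * Real.pi * I / g) ^ j) ^ m := by
  rw [← exp_int_mul, ← exp_nat_mul, ← exp_add]
  ring_nf

theorem Complex.average_exp_mul_I_shift_div {g : ℕ} (hg : g ≠ 0) (j : ℤ) (x : ℂ) :
    (g : ℂ)⁻¹ * ∑ m ∈ Finset.range g, exp (I * j * ((x + 2 * Real.pi * m) / g)) =
      if (g : ℤ) ∣ j then exp (I * (j / g : ℤ) * x) else 0 := by
  simp only [exp_mul_I_shift_div, ← Finset.mul_sum,
    (isPrimitiveRoot_exp g hg).geom_sum_zpow_eq_ite j]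
  split_ifs with hj
  · obtain ⟨l, rfl⟩ := hj
    have hgC : (g : ℂ) ≠ 0 := Nat.cast_ne_zero.mpr hg
    rw [Int.mul_ediv_cancel_left _ (by exact_mod_cast hg)]
    push_cast
    field_simp
  · simp

theorem Complex.average_trigPoly_shift_div {g : ℕ} (hg : g ≠ 0) (c : ℕ) (a : ℤ → ℂ) (x : ℂ) :
    (g : ℂ)⁻¹ * ∑ m ∈ Finset.range g, ∑ j ∈ Finset.Icc (-(c : ℤ)) c,
        a j * exp (I * j * ((x + 2 * Real.pi * m) / g)) =
      ∑ l ∈ Finset.Icc (-((c / g : ℕ) : ℤ)) ((c / g : ℕ) : ℤ), a (g * l) * exp (I * l * x) := by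
  have hgZ : (0 : ℤ) < g := by exact_mod_cast Nat.pos_of_ne_zero hg
  calc _ = ∑ j ∈ Finset.Icc (-(c : ℤ)) c,
        a j * ((g : ℂ)⁻¹ * ∑ m ∈ Finset.range g, exp (I * j * ((x + 2 * Real.pi * m) / g))) := by
        rw [Finset.sum_comm, Finset.mul_sum]
        simp only [Finset.mul_sum]
        refine Finset.sum_congr rfl fun j _ => Finset.sum_congr rfl fun m _ => ?_
        ring
    _ = ∑ j ∈ (Finset.Icc (-(c : ℤ)) c).filter ((g : ℤ) ∣ ·), a j * exp (I * (j / g : ℤ) * x) := by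
        simp only [average_exp_mul_I_shift_div hg, mul_ite, mul_zero, Finset.sum_filter]
    _ = _ := by
        rw [Int.filter_dvd_Icc_neg hgZ, Finset.sum_image fun _ _ _ _ h => mul_left_cancel₀ hgZ.ne' h,
          Int.natCast_ediv]
        simp only [Int.mul_ediv_cancel_left _ hgZ.ne']

theorem projSymbol_degree_general (g : ℕ) (hg : 2 ≤ g)
    (f p : ℝ → ℝ)
    (c : ℕ)
    (hdeg : ∃ a : ℤ → ℂ, ∀ x : ℝ,
      ((f x * (p x)^2 : ℝ) : ℂ) =
        ∑ j ∈ Finset.Icc (-(c : ℤ)) (c : ℤ), a j * Complex.exp (Complex.I * (j : ℂ) * (x : ℂ))) :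
    ∃ b : ℤ → ℂ, ∀ x : ℝ,
      ((projSymbol g f p x : ℝ) : ℂ) =
        ∑ j ∈ Finset.Icc (-((c / g : ℕ) : ℤ)) ((c / g : ℕ) : ℤ),
          b j * Complex.exp (Complex.I * (j : ℂ) * (x : ℂ)) := by
  obtain ⟨a, ha⟩ := hdeg
  refine ⟨fun l => a (g * l), fun x => ?_⟩
  rw [← Complex.average_trigPoly_shift_div (by omega) c a x, projSymbol]
  push_cast
  congr 1
  refine Finset.sum_congr rfl fun m _ => ?_
  simpa using ha ((x + 2 * Real.pi * m) / g)

theorem projSymbol_degree (n g k : ℕ) (hg : 2 ≤ g) (hk : 0 < k) (hn : n = g * k)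
    (f p : ℝ → ℝ) (hf : IsTrigPolyR f) (hf0 : ∀ x, 0 ≤ f x) (hp : IsTrigPolyR p)
    (hc1 : TGMCondOne f p g) (hc2 : TGMCondTwo p g)
    (c : ℕ)
    (hdeg : ∃ a : ℤ → ℂ, ∀ x : ℝ,
      ((f x * (p x)^2 : ℝ) : ℂ) =
        ∑ j ∈ Finset.Icc (-(c : ℤ)) (c : ℤ), a j * Complex.exp (Complex.I * (j : ℂ) * (x : ℂ))) :
    ∃ b : ℤ → ℂ, ∀ x : ℝ,
      ((projSymbol g f p x : ℝ) : ℂ) =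
        ∑ j ∈ Finset.Icc (-((c / g : ℕ) : ℤ)) ((c / g : ℕ) : ℤ),
          b j * Complex.exp (Complex.I * (j : ℂ) * (x : ℂ)) :=
  projSymbol_degree_general g hg f p c hdeg
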